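/- arXiv:2002.01318 — 6 statements merged into one kernel-verified Lean document; each statement's English description precedes it below -/
import Mathlib

section
/- Let ε = e^{πi/3} and P be the 3×3 complex matrix with P₁₂ = ε², P₂₁ = ε⁴, P₃₃ = 1 and all other entries 0. Define σ : sl(3,ℂ) → sl(3,ℂ) by σ(ξ) = −P ξᵀ P⁻¹. Then σ is a Lie algebra automorphism of sl(3,ℂ) (it is linear, bijective and satisfies σ([ξ,η]) = [σ(ξ),σ(η)]) of order exactly 6, i.e. σ⁶ = id and σᵏ ≠ id for k = 1,2,3,4,5. -/
/-!
The map `ξ ↦ -ξᵀ` negates and reverses products, so it preserves commutators and trace zero,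
and so does its composite with conjugation by any invertible `P`. For the given `P` one has
`P² = 1` because `ε⁶ = 1`, so `σ²` is conjugation by the diagonal matrix
`P Pᵀ = diag(ε⁴, ε⁸, 1)`, whose cube is `1`; hence `σ⁶ = id`. On the root vector `E₁₃`, odd
powers of `σ` land in the line of `E₃₂`, while `σ²` multiplies `E₁₃` by `ε⁴ ≠ 1` (a primitive
cube root of unity), so no `σᵏ` with `0 < k < 6` fixes `E₁₃`.
-/

open Matrix Complex

noncomputable def epsConst : ℂ := Complex.exp (Real.pi * Complex.I / 3)

noncomputable def Pmat : Matrix (Fin 3) (Fin 3) ℂ :=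
  !![0, epsConst ^ 2, 0; epsConst ^ 4, 0, 0; 0, 0, 1]

/-- The automorphism σ(ξ) = −P ξᵀ P⁻¹ of sl(3,ℂ). -/
noncomputable def sigmaAut (ξ : Matrix (Fin 3) (Fin 3) ℂ) : Matrix (Fin 3) (Fin 3) ℂ :=
  -(Pmat * ξᵀ * Pmat⁻¹)

theorem Function.bijective_of_iterate_eq_self {α : Type*} {f : α → α} {n : ℕ} (hn : n ≠ 0)
    (h : ∀ x, f^[n] x = x) : Function.Bijective f := by
  obtain ⟨m, rfl⟩ := Nat.exists_eq_succ_of_ne_zero hn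
  refine Function.bijective_iff_has_inverse.2 ⟨f^[m], fun x => ?_, fun x => ?_⟩
  · rw [← Function.iterate_succ_apply, h]
  · rw [← Function.iterate_succ_apply' f m, h]

theorem mul_left_mul_right_iterate_apply {M : Type*} [Monoid M] (a b x : M) (m : ℕ) :
    (fun y => a * y * b)^[m] x = a ^ m * x * b ^ m := by
  induction m with
  | zero => simp
  | succ m ih => rw [Function.iterate_succ_apply', ih, pow_succ', pow_succ]; noncomm_ring

namespace Matrix

variable {n R : Type*} [Fintype n] [DecidableEq n] [CommRing R]

noncomputable def negTransposeConj (P ξ : Matrix n n R) : Matrix n n R := -(P * ξᵀ * P⁻¹)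

variable {P : Matrix n n R}

theorem trace_negTransposeConj (hP : IsUnit P.det) (ξ : Matrix n n R) :
    (negTransposeConj P ξ).trace = -ξ.trace := by
  rw [negTransposeConj, trace_neg, trace_mul_cycle, nonsing_inv_mul P hP, Matrix.one_mul,
    trace_transpose]

theorem negTransposeConj_add_smul (P : Matrix n n R) (a b : R) (ξ η : Matrix n n R) :
    negTransposeConj P (a • ξ + b • η) = a • negTransposeConj P ξ + b • negTransposeConj P η := by
  simp only [negTransposeConj, transpose_add, transpose_smul, Matrix.mul_add, Matrix.add_mul,
    Matrix.mul_smul, Matrix.smul_mul, neg_add, smul_neg]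

theorem negTransposeConj_lie (hP : IsUnit P.det) (ξ η : Matrix n n R) :
    negTransposeConj P (ξ * η - η * ξ) =
      negTransposeConj P ξ * negTransposeConj P η - negTransposeConj P η * negTransposeConj P ξ := by
  have conj_mul (A B : Matrix n n R) : P * A * P⁻¹ * (P * B * P⁻¹) = P * (A * B) * P⁻¹ := by
    simp only [Matrix.mul_assoc, P.nonsing_inv_mul_cancel_left _ hP]
  simp only [negTransposeConj, Matrix.neg_mul, Matrix.mul_neg, neg_neg, conj_mul, transpose_sub,
    transpose_mul, Matrix.mul_sub, Matrix.sub_mul]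
  abel

theorem negTransposeConj_negTransposeConj (P ξ : Matrix n n R) :
    negTransposeConj P (negTransposeConj P ξ) = P * P⁻¹ᵀ * ξ * (Pᵀ * P⁻¹) := by
  simp only [negTransposeConj, transpose_neg, transpose_mul, transpose_transpose, Matrix.mul_neg,
    Matrix.neg_mul, neg_neg, Matrix.mul_assoc]

theorem negTransposeConj_iterate_two_mul (P ξ : Matrix n n R) (m : ℕ) :
    (negTransposeConj P)^[2 * m] ξ = (P * P⁻¹ᵀ) ^ m * ξ * (Pᵀ * P⁻¹) ^ m := by
  rw [Function.iterate_mul, ← mul_left_mul_right_iterate_apply]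
  congr 1
  funext ξ
  exact negTransposeConj_negTransposeConj P ξ

end Matrix

theorem isPrimitiveRoot_epsConst : IsPrimitiveRoot epsConst 6 := by
  convert Complex.isPrimitiveRoot_exp 6 (by norm_num) using 2
  rw [epsConst]
  push_cast
  ring_nf

theorem epsConst_pow_six : epsConst ^ 6 = 1 := isPrimitiveRoot_epsConst.pow_eq_one

theorem Pmat_mul_self : Pmat * Pmat = 1 := by
  ext i j
  fin_cases i <;> fin_cases j <;> simp [Pmat, Matrix.mul_apply, Fin.sum_univ_three] <;>
    linear_combination epsConst_pow_six

theorem Pmat_inv : Pmat⁻¹ = Pmat := inv_eq_left_inv Pmat_mul_self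

theorem isUnit_det_Pmat : IsUnit Pmat.det := isUnit_det_of_left_inverse Pmat_mul_self

theorem sigmaAut_eq_negTransposeConj : sigmaAut = negTransposeConj Pmat := rfl

theorem Pmat_mul_transpose : Pmat * Pmatᵀ = diagonal ![epsConst ^ 4, epsConst ^ 8, 1] := by
  ext i j
  fin_cases i <;> fin_cases j <;> simp [Pmat, Matrix.mul_apply, Fin.sum_univ_three] <;> ring

theorem Pmat_transpose_mul : Pmatᵀ * Pmat = diagonal ![epsConst ^ 8, epsConst ^ 4, 1] := by
  ext i j
  fin_cases i <;> fin_cases j <;> simp [Pmat, Matrix.mul_apply, Fin.sum_univ_three] <;> ring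

theorem sigmaAut_iterate_two_mul (ξ : Matrix (Fin 3) (Fin 3) ℂ) (m : ℕ) :
    sigmaAut^[2 * m] ξ =
      diagonal (![epsConst ^ 4, epsConst ^ 8, 1] ^ m) * ξ *
        diagonal (![epsConst ^ 8, epsConst ^ 4, 1] ^ m) := by
  rw [sigmaAut_eq_negTransposeConj, negTransposeConj_iterate_two_mul, Pmat_inv,
    Pmat_mul_transpose, Pmat_transpose_mul, diagonal_pow, diagonal_pow]

theorem sigmaAut_iterate_six (ξ : Matrix (Fin 3) (Fin 3) ℂ) : sigmaAut^[6] ξ = ξ := by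
  have cube_eq_one (a b : ℕ) (ha : 6 ∣ a * 3) (hb : 6 ∣ b * 3) :
      (![epsConst ^ a, epsConst ^ b, 1] : Fin 3 → ℂ) ^ 3 = 1 := by
    funext i
    fin_cases i <;> simp [← pow_mul, isPrimitiveRoot_epsConst.pow_eq_one_iff_dvd, *]
  rw [sigmaAut_iterate_two_mul ξ 3, cube_eq_one 4 8 (by norm_num) (by norm_num),
    cube_eq_one 8 4 (by norm_num) (by norm_num)]
  simp

theorem sigmaAut_apply_zero_two (ξ : Matrix (Fin 3) (Fin 3) ℂ) :
    sigmaAut ξ 0 2 = -(epsConst ^ 2 * ξ 2 1) := by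
  rw [show sigmaAut ξ = -(Pmat * ξᵀ * Pmat) by rw [sigmaAut, Pmat_inv], neg_apply,
    mul_apply, Fin.sum_univ_three]
  simp [Pmat, mul_apply, Fin.sum_univ_three]

theorem sigmaAut_iterate_two_mul_single_apply (j : ℕ) :
    sigmaAut^[2 * j] (single 0 2 1) 0 2 = epsConst ^ (4 * j) := by
  simp [sigmaAut_iterate_two_mul, mul_diagonal, pow_mul]

theorem sigmaAut_iterate_two_mul_add_one_single_apply (j : ℕ) :
    sigmaAut^[2 * j + 1] (single 0 2 1) 0 2 = 0 := by
  rw [Function.iterate_succ_apply', sigmaAut_apply_zero_two, sigmaAut_iterate_two_mul]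
  simp [mul_diagonal]

theorem sigmaAut_iterate_single_ne {k : ℕ} (hk₁ : 1 ≤ k) (hk₅ : k ≤ 5) :
    sigmaAut^[k] (single 0 2 1) ≠ single 0 2 1 := by
  intro h
  have h02 : sigmaAut^[k] (single 0 2 1) 0 2 = 1 := by simp [h]
  obtain ⟨j, rfl | rfl⟩ := Nat.even_or_odd' k
  · rw [sigmaAut_iterate_two_mul_single_apply, isPrimitiveRoot_epsConst.pow_eq_one_iff_dvd] at h02
    omega
  · rw [sigmaAut_iterate_two_mul_add_one_single_apply] at h02
    exact zero_ne_one h02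

/-- σ is a Lie algebra automorphism of sl(3,ℂ) of order exactly 6. -/
theorem sigmaAut_is_order_six_lie_automorphism :
    -- σ preserves sl(3,ℂ), i.e. tracelessness
    (∀ ξ : Matrix (Fin 3) (Fin 3) ℂ, ξ.trace = 0 → (sigmaAut ξ).trace = 0) ∧
    -- σ is (complex) linear
    (∀ (a b : ℂ) (ξ η : Matrix (Fin 3) (Fin 3) ℂ),
      sigmaAut (a • ξ + b • η) = a • sigmaAut ξ + b • sigmaAut η) ∧
    -- σ is bijective
    Function.Bijective sigmaAut ∧
    -- σ respects the Lie bracket [ξ,η] = ξη − ηξ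
    (∀ ξ η : Matrix (Fin 3) (Fin 3) ℂ,
      sigmaAut (ξ * η - η * ξ) = sigmaAut ξ * sigmaAut η - sigmaAut η * sigmaAut ξ) ∧
    -- σ⁶ = id
    (∀ ξ : Matrix (Fin 3) (Fin 3) ℂ, sigmaAut^[6] ξ = ξ) ∧
    -- σᵏ ≠ id on sl(3,ℂ) for k = 1,…,5
    (∀ k : ℕ, 1 ≤ k → k ≤ 5 →
      ∃ ξ : Matrix (Fin 3) (Fin 3) ℂ, ξ.trace = 0 ∧ sigmaAut^[k] ξ ≠ ξ) := by
  refine ⟨fun ξ hξ => ?_, negTransposeConj_add_smul Pmat,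
    Function.bijective_of_iterate_eq_self (by norm_num) sigmaAut_iterate_six,
    negTransposeConj_lie isUnit_det_Pmat, sigmaAut_iterate_six,
    fun k hk₁ hk₅ => ⟨single 0 2 1, by simp, sigmaAut_iterate_single_ne hk₁ hk₅⟩⟩
  rw [sigmaAut_eq_negTransposeConj, trace_negTransposeConj isUnit_det_Pmat, hξ, neg_zero]
end

section
/- Let λ₀ ∈ ℂ with |λ₀| = 1, let α = e^{2πi/3}, let k ∈ {0,1,2} and l₁, l₂, l₃ ∈ ℤ, and let δ ∈ ℂ. If Re(λ₀⁻¹ δ) = kπ/3 + l₁π, Re(λ₀⁻¹ α δ) = kπ/3 + l₂π and Re(λ₀⁻¹ α² δ) = kπ/3 + l₃π, then δ = ((2l₁ − l₂ − l₃)/3)·λ₀π + i·((l₃ − l₂)/√3)·λ₀π. -/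
/-!
Put `w = λ₀⁻¹ δ` and `α = e^{2πi/3}`. The hypotheses prescribe the real parts of `w`, `α w` and
`α² w`, which are `Re w` and `-Re w / 2 ∓ (√3 / 2) Im w`; this linear system is solved by
`Re w = (2x₁ - x₂ - x₃) / 3`, `Im w = (x₃ - x₂) / √3`, and both expressions are invariant under
adding a common constant such as `kπ/3` to all `xᵢ`.
-/

open Complex Real

lemma exp_two_pi_I_div_three : exp (2 * π * I / 3) = -1 / 2 + √3 / 2 * I := by
  have harg : 2 * (π : ℂ) * I / 3 = ((π - π / 3 : ℝ) : ℂ) * I := by push_cast; ring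
  rw [harg, exp_mul_I, ← ofReal_cos, ← ofReal_sin, Real.cos_pi_sub, Real.sin_pi_sub,
    cos_pi_div_three, sin_pi_div_three]
  push_cast
  ring

lemma exp_two_pi_I_div_three_sq : exp (2 * π * I / 3) ^ 2 = -1 / 2 - √3 / 2 * I := by
  have hsqrt : (√3 : ℂ) ^ 2 = 3 := by rw [← ofReal_pow, sq_sqrt zero_le_three]; norm_num
  rw [exp_two_pi_I_div_three]
  linear_combination (I ^ 2 / 4) * hsqrt + 3 / 4 * I_sq

lemma re_exp_two_pi_I_div_three_mul (w : ℂ) :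
    (exp (2 * π * I / 3) * w).re = -1 / 2 * w.re - √3 / 2 * w.im := by
  rw [exp_two_pi_I_div_three]
  simp

lemma re_exp_two_pi_I_div_three_sq_mul (w : ℂ) :
    (exp (2 * π * I / 3) ^ 2 * w).re = -1 / 2 * w.re + √3 / 2 * w.im := by
  rw [exp_two_pi_I_div_three_sq]
  simp

lemma eq_of_re_mul_cube_roots_of_unity (w : ℂ) {x₁ x₂ x₃ : ℝ} (h₁ : w.re = x₁)
    (h₂ : (exp (2 * π * I / 3) * w).re = x₂) (h₃ : (exp (2 * π * I / 3) ^ 2 * w).re = x₃) :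
    w = (2 * x₁ - x₂ - x₃) / 3 + I * ((x₃ - x₂) / √3) := by
  rw [re_exp_two_pi_I_div_three_mul] at h₂
  rw [re_exp_two_pi_I_div_three_sq_mul] at h₃
  have hre : w.re = (2 * x₁ - x₂ - x₃) / 3 := by linear_combination (2 * h₁ - h₂ - h₃) / 3
  have him : w.im = (x₃ - x₂) / √3 := by
    field_simp
    linear_combination h₃ - h₂
  rw [← re_add_im w, hre, him]
  push_cast
  ring

theorem clifford_closing_conditions_general
    (lam : ℂ) (hlam : ‖lam‖ = 1)
    (k : ℤ)
    (l₁ l₂ l₃ : ℤ) (δ : ℂ)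
    (h1 : (lam⁻¹ * δ).re = (k : ℝ) * Real.pi / 3 + (l₁ : ℝ) * Real.pi)
    (h2 : (lam⁻¹ * Complex.exp (2 * Real.pi * Complex.I / 3) * δ).re =
      (k : ℝ) * Real.pi / 3 + (l₂ : ℝ) * Real.pi)
    (h3 : (lam⁻¹ * Complex.exp (2 * Real.pi * Complex.I / 3) ^ 2 * δ).re =
      (k : ℝ) * Real.pi / 3 + (l₃ : ℝ) * Real.pi) :
    δ = (((2 * l₁ - l₂ - l₃ : ℤ) : ℂ) / 3) * lam * (Real.pi : ℂ) +
        Complex.I * (((l₃ - l₂ : ℤ) : ℂ) / (Real.sqrt 3 : ℂ)) * lam * (Real.pi : ℂ) := by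
  have hlam₀ : lam ≠ 0 := norm_ne_zero_iff.mp (hlam ▸ one_ne_zero)
  have hcomm (z : ℂ) : lam⁻¹ * z * δ = z * (lam⁻¹ * δ) := by ring
  rw [hcomm] at h2 h3
  have hw := eq_of_re_mul_cube_roots_of_unity (lam⁻¹ * δ) h1 h2 h3
  calc δ = lam * (lam⁻¹ * δ) := by field_simp
    _ = _ := by rw [hw]; push_cast; ring

/-- Solution of the period-closing conditions for the associated family of the
Clifford torus. -/
theorem clifford_closing_conditions
    (lam : ℂ) (hlam : ‖lam‖ = 1)
    (k : ℤ) (hk : k = 0 ∨ k = 1 ∨ k = 2)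
    (l₁ l₂ l₃ : ℤ) (δ : ℂ)
    (h1 : (lam⁻¹ * δ).re = (k : ℝ) * Real.pi / 3 + (l₁ : ℝ) * Real.pi)
    (h2 : (lam⁻¹ * Complex.exp (2 * Real.pi * Complex.I / 3) * δ).re =
      (k : ℝ) * Real.pi / 3 + (l₂ : ℝ) * Real.pi)
    (h3 : (lam⁻¹ * Complex.exp (2 * Real.pi * Complex.I / 3) ^ 2 * δ).re =
      (k : ℝ) * Real.pi / 3 + (l₃ : ℝ) * Real.pi) :
    δ = (((2 * l₁ - l₂ - l₃ : ℤ) : ℂ) / 3) * lam * (Real.pi : ℂ) +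
        Complex.I * (((l₃ - l₂ : ℤ) : ℂ) / (Real.sqrt 3 : ℂ)) * lam * (Real.pi : ℂ) :=
  clifford_closing_conditions_general lam hlam k l₁ l₂ l₃ δ h1 h2 h3
end

section
/- Let A be the 3×3 complex matrix with A₁₃ = A₂₁ = A₃₂ = i and all other entries 0, and let τ(A) = −conj(A)ᵀ (so τ(A) has entries τ(A)₁₂ = τ(A)₂₃ = τ(A)₃₁ = i and all other entries 0). For λ₀ ∈ ℂ with |λ₀| = 1 and δ ∈ ℂ, define M(δ, λ₀) = exp(δλ₀⁻¹ A + conj(δ)·λ₀·τ(A)) (matrix exponential). Then the following are equivalent: (a) there exists c ∈ ℂ with c³ = 1 and M(δ, λ₀) = c·I; (b) there exist integers l₁, l₂, l₃ such that δ = ((2l₁ − l₂ − l₃)/3)·λ₀π + i·((l₃ − l₂)/√3)·λ₀π. -/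
/-!
The matrix `z • A + w • τ(A)` is the circulant `circulant ![0, I z, I w]`, so the discrete Fourier
matrix of a primitive cube root of unity `ω` diagonalizes it, with eigenvalues
`I (z + w)`, `I (z ω² + w ω)`, `I (z ω + w ω²)` summing to `0`. Hence its exponential is a scalar
`c` exactly when the three eigenvalues agree modulo `2πi`, and then `c³ = 1` automatically.
For `z = δ / λ₀` and `w = conj δ · λ₀ = conj z` these two congruences say precisely that `z` lies
in `(2π/3) ℤ[ω]`, which in coordinates is the lattice of the statement.
-/

open Complex Matrix

/-- The coefficient matrix A of the normalized potential of the Clifford torus. -/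
noncomputable def Amat : Matrix (Fin 3) (Fin 3) ℂ :=
  !![0, 0, Complex.I; Complex.I, 0, 0; 0, Complex.I, 0]

/-- τ(A) = −conj(A)ᵀ. -/
noncomputable def tauAmat : Matrix (Fin 3) (Fin 3) ℂ :=
  !![0, Complex.I, 0; 0, 0, Complex.I; Complex.I, 0, 0]

/-- The monodromy matrix M(δ, λ₀) = exp(δλ₀⁻¹A + conj(δ)λ₀τ(A)). -/
noncomputable def monodromy (δ lam : ℂ) : Matrix (Fin 3) (Fin 3) ℂ :=
  NormedSpace.exp ((δ * lam⁻¹) • Amat + ((starRingEnd ℂ) δ * lam) • tauAmat)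

open ComplexConjugate

theorem Matrix.exp_conj_eq_smul_one_iff {n : Type*} [Fintype n] [DecidableEq n]
    {U V : Matrix n n ℂ} (hUV : U * V = 1) (d : n → ℂ) (c : ℂ) :
    NormedSpace.exp (U * diagonal d * V) = c • 1 ↔ ∀ k, cexp (d k) = c := by
  have hVU : V * U = 1 := mul_eq_one_comm.mp hUV
  have hU : IsUnit U := ⟨⟨U, V, hUV, hVU⟩, rfl⟩
  have hexp : NormedSpace.exp d = fun k => cexp (d k) := by
    rw [Pi.exp_def, Complex.exp_eq_exp_ℂ]
  rw [← inv_eq_right_inv hUV, exp_conj _ _ hU, exp_diagonal, hexp, inv_eq_right_inv hUV,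
    ← diagonal_eq_diagonal_iff, ← smul_one_eq_diagonal]
  constructor
  · intro h
    calc diagonal (fun k => cexp (d k))
        = V * (U * diagonal (fun k => cexp (d k)) * V) * U := by
          simp only [← mul_assoc, hVU, one_mul, mul_assoc _ V U, mul_one]
      _ = c • 1 := by rw [h, Matrix.mul_smul, Matrix.smul_mul, mul_one, hVU]
  · intro h
    rw [h, Matrix.mul_smul, Matrix.smul_mul, mul_one, hUV]

theorem exists_pow_eq_one_and_forall_exp_eq_iff {n : ℕ} [NeZero n] (μ : Fin n → ℂ)
    (hμ : ∑ k, μ k = 0) :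
    (∃ c : ℂ, c ^ n = 1 ∧ ∀ k, cexp (μ k) = c) ↔ ∀ k, cexp (μ k) = cexp (μ 0) := by
  constructor
  · rintro ⟨c, -, hc⟩ k
    rw [hc, hc]
  · intro h
    refine ⟨cexp (μ 0), ?_, h⟩
    calc cexp (μ 0) ^ n = ∏ k, cexp (μ k) := by simp [h]
      _ = 1 := by rw [← Complex.exp_sum, hμ, Complex.exp_zero]

section CubeRoot

variable {ω : ℂ}

noncomputable def dft3 (ω : ℂ) : Matrix (Fin 3) (Fin 3) ℂ :=
  !![1, 1, 1; 1, ω, ω ^ 2; 1, ω ^ 2, ω]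

theorem dft3_mul_dft3_sq (hω : ω ^ 2 + ω + 1 = 0) : dft3 ω * dft3 (ω ^ 2) = (3 : ℂ) • 1 := by
  ext i j
  fin_cases i <;> fin_cases j <;> simp [dft3, mul_apply, Fin.sum_univ_three, one_apply] <;> grind

theorem circulant_mul_dft3 (hω : ω ^ 3 = 1) (a b c : ℂ) :
    circulant ![a, b, c] * dft3 ω =
      dft3 ω * diagonal ![a + b + c, a + b * ω ^ 2 + c * ω, a + b * ω + c * ω ^ 2] := by
  ext i j
  fin_cases i <;> fin_cases j <;> simp [dft3, mul_apply, Fin.sum_univ_three, circulant_apply] <;>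
    grind

theorem dft3_mul_smul_dft3_sq (hω : ω ^ 2 + ω + 1 = 0) :
    dft3 ω * ((1 / 3 : ℂ) • dft3 (ω ^ 2)) = 1 := by
  rw [Matrix.mul_smul, dft3_mul_dft3_sq hω, smul_smul]
  norm_num

theorem circulant_eq_dft3_mul_diagonal_mul (hω : ω ^ 2 + ω + 1 = 0) (a b c : ℂ) :
    circulant ![a, b, c] =
      dft3 ω * diagonal ![a + b + c, a + b * ω ^ 2 + c * ω, a + b * ω + c * ω ^ 2] *
        ((1 / 3 : ℂ) • dft3 (ω ^ 2)) := by
  rw [← circulant_mul_dft3 (by linear_combination (ω - 1) * hω), mul_assoc,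
    dft3_mul_smul_dft3_sq hω, mul_one]

theorem sum_circulant3_eigenvalues (hω : ω ^ 2 + ω + 1 = 0) (a b c : ℂ) :
    ∑ k, ![a + b + c, a + b * ω ^ 2 + c * ω, a + b * ω + c * ω ^ 2] k = 3 * a := by
  simp only [Fin.sum_univ_three, cons_val_zero, cons_val_one, cons_val_two, head_cons, tail_cons]
  linear_combination (b + c) * hω

noncomputable def closingLatticePoint (ω : ℂ) (l₁ l₂ l₃ : ℤ) : ℂ :=
  2 * Real.pi / 3 * (l₁ + l₂ * ω ^ 2 + l₃ * ω)

/-- Eliminating `w` leaves `3 (ω - ω²) z = 2π (m (ω² - 1) - n (ω - 1))`, and `(ω - ω²)² = -3`. -/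
theorem exists_eq_closingLatticePoint_of_exp_eq (hω : ω ^ 2 + ω + 1 = 0) {z w : ℂ}
    (h₁ : cexp (I * z * ω ^ 2 + I * w * ω) = cexp (I * z + I * w))
    (h₂ : cexp (I * z * ω + I * w * ω ^ 2) = cexp (I * z + I * w)) :
    ∃ l₁ l₂ l₃ : ℤ, z = closingLatticePoint ω l₁ l₂ l₃ := by
  obtain ⟨m, hm⟩ := Complex.exp_eq_exp_iff_exists_int.mp h₁
  obtain ⟨n, hn⟩ := Complex.exp_eq_exp_iff_exists_int.mp h₂
  have hI := Complex.I_sq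
  refine ⟨0, n, m, ?_⟩
  rw [closingLatticePoint]
  grind

theorem exp_eq_of_eq_closingLatticePoint (hω : ω ^ 2 + ω + 1 = 0) (l₁ l₂ l₃ : ℤ) :
    let z := closingLatticePoint ω l₁ l₂ l₃
    let w := closingLatticePoint ω l₁ l₃ l₂
    cexp (I * z * ω ^ 2 + I * w * ω) = cexp (I * z + I * w) ∧
      cexp (I * z * ω + I * w * ω ^ 2) = cexp (I * z + I * w) := by
  simp only [closingLatticePoint, Complex.exp_eq_exp_iff_exists_int]
  refine ⟨⟨l₃ - l₁, ?_⟩, ⟨l₂ - l₁, ?_⟩⟩ <;> push_cast <;> grind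

end CubeRoot

noncomputable def cubeRootOfUnity : ℂ := (-1 + (Real.sqrt 3 : ℂ) * I) / 2

theorem ofReal_sqrt_three_sq : (Real.sqrt 3 : ℂ) ^ 2 = 3 := by
  rw [← Complex.ofReal_pow, Real.sq_sqrt (by norm_num)]
  norm_num

theorem cubeRootOfUnity_sq_add_self_add_one :
    cubeRootOfUnity ^ 2 + cubeRootOfUnity + 1 = 0 := by
  rw [cubeRootOfUnity]
  linear_combination I ^ 2 / 4 * ofReal_sqrt_three_sq + (3 / 4 : ℂ) * Complex.I_sq

theorem conj_closingLatticePoint_cubeRootOfUnity (l₁ l₂ l₃ : ℤ) :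
    conj (closingLatticePoint cubeRootOfUnity l₁ l₂ l₃) =
      closingLatticePoint cubeRootOfUnity l₁ l₃ l₂ := by
  simp only [closingLatticePoint, cubeRootOfUnity, map_add, map_mul, map_div₀, map_pow,
    map_neg, map_one, map_ofNat, map_intCast, Complex.conj_ofReal, Complex.conj_I]
  have := ofReal_sqrt_three_sq
  have := Complex.I_sq
  grind

theorem closingLatticePoint_cubeRootOfUnity_mul (l₁ l₂ l₃ : ℤ) (lam : ℂ) :
    closingLatticePoint cubeRootOfUnity l₁ l₂ l₃ * lam =
      ((2 * l₁ - l₂ - l₃ : ℤ) : ℂ) / 3 * lam * Real.pi +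
        I * (((l₃ - l₂ : ℤ) : ℂ) / (Real.sqrt 3 : ℂ)) * lam * Real.pi := by
  have hs : (Real.sqrt 3 : ℂ) ≠ 0 := by
    intro h; have := ofReal_sqrt_three_sq; rw [h] at this; norm_num at this
  rw [closingLatticePoint, cubeRootOfUnity]
  field_simp
  push_cast
  have := ofReal_sqrt_three_sq
  have := Complex.I_sq
  grind

theorem monodromy_eq_exp_circulant (δ lam : ℂ) :
    monodromy δ lam = NormedSpace.exp (circulant ![0, I * (δ * lam⁻¹), I * (conj δ * lam)]) := by
  rw [monodromy]
  congr 1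
  ext i j
  fin_cases i <;> fin_cases j <;> simp [Amat, tauAmat, circulant_apply, mul_comm]

/-- The closing condition for the associated family of the Clifford torus:
the monodromy is a cube root of unity times the identity exactly for the
translations in the λ₀-rotated Clifford lattice. -/
theorem clifford_monodromy_closing (lam : ℂ) (hlam : ‖lam‖ = 1) (δ : ℂ) :
    (∃ c : ℂ, c ^ 3 = 1 ∧ monodromy δ lam = c • (1 : Matrix (Fin 3) (Fin 3) ℂ)) ↔
    (∃ l₁ l₂ l₃ : ℤ,
      δ = (((2 * l₁ - l₂ - l₃ : ℤ) : ℂ) / 3) * lam * (Real.pi : ℂ) +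
          Complex.I * (((l₃ - l₂ : ℤ) : ℂ) / (Real.sqrt 3 : ℂ)) * lam * (Real.pi : ℂ)) := by
  have hω := cubeRootOfUnity_sq_add_self_add_one
  set ω := cubeRootOfUnity
  have hlam0 : lam ≠ 0 := norm_ne_zero_iff.mp (by rw [hlam]; exact one_ne_zero)
  simp only [monodromy_eq_exp_circulant, circulant_eq_dft3_mul_diagonal_mul hω,
    exp_conj_eq_smul_one_iff (dft3_mul_smul_dft3_sq hω)]
  rw [exists_pow_eq_one_and_forall_exp_eq_iff _ (by rw [sum_circulant3_eigenvalues hω, mul_zero]),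
    Fin.forall_fin_succ, Fin.forall_fin_two]
  simp only [cons_val_succ, cons_val_zero, cons_val_one, zero_add, true_and,
    ← closingLatticePoint_cubeRootOfUnity_mul, ← mul_inv_eq_iff_eq_mul₀ hlam0]
  constructor
  · exact fun ⟨h₁, h₂⟩ => exists_eq_closingLatticePoint_of_exp_eq hω h₁ h₂
  · rintro ⟨l₁, l₂, l₃, hz⟩
    have hw : conj δ * lam = closingLatticePoint ω l₁ l₃ l₂ := by
      rw [← conj_closingLatticePoint_cubeRootOfUnity, ← hz, map_mul, map_inv₀,
        ← Complex.inv_eq_conj hlam, inv_inv]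
    rw [hz, hw]
    exact exp_eq_of_eq_closingLatticePoint hω l₁ l₂ l₃
end

section
/- Let r > 0 and θ, β ∈ ℝ, set a = i r e^{iθ} and b = i r e^{iβ}, and let A be the 3×3 complex matrix with A₁₃ = a, A₂₁ = b, A₃₂ = a and all other entries 0. Put δ = (β − θ)/3 and D = diag(e^{iδ}, e^{−iδ}, 1). Then D·A·D⁻¹ = i r e^{i(2θ+β)/3}·E, where E is the 3×3 matrix with E₁₃ = E₂₁ = E₃₂ = 1 and all other entries 0. Consequently, any matrix A of this vacuum form with |a| = |b| = r > 0 is conjugate by a diagonal special unitary matrix to a complex scalar multiple (of modulus r) of E. -/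
/-!
Write u = e^{iδ} and φ = (2θ + β)/3. Then e^{iθ} = e^{iφ} u⁻¹ and e^{iβ} = e^{iφ} u², so the
nonzero entries of A are i r e^{iφ} times u⁻¹, u², u⁻¹. Conjugating by diag(d) multiplies the
(i, j) entry by dᵢ / dⱼ, which for d = (u, u⁻¹, 1) is u, u⁻², u at these three positions.
-/

open Complex Matrix

theorem Matrix.diagonal_mul_mul_inv_diagonal {n K : Type*} [Fintype n] [DecidableEq n] [Field K]
    {d : n → K} (hd : ∀ i, d i ≠ 0) (A : Matrix n n K) :
    diagonal d * A * (diagonal d)⁻¹ = of fun i j => d i * A i j / d j := by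
  have hinv : (diagonal d)⁻¹ = diagonal fun i => (d i)⁻¹ :=
    inv_eq_right_inv <| by simp [diagonal_mul_diagonal, hd, ← diagonal_one]
  ext i j
  simp [hinv, div_eq_mul_inv]

theorem Matrix.diagonal_mem_unitaryGroup {n 𝕜 : Type*} [Fintype n] [DecidableEq n] [RCLike 𝕜]
    {d : n → 𝕜} (hd : ∀ i, ‖d i‖ = 1) : diagonal d ∈ unitaryGroup n 𝕜 := by
  rw [mem_unitaryGroup_iff', star_eq_conjTranspose, diagonal_conjTranspose, diagonal_mul_diagonal,
    ← diagonal_one]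
  congr 1
  ext i
  simp [RCLike.conj_mul, hd i]

/-- Gauging an arbitrary vacuum potential coefficient to the Clifford one:
with a = ire^{iθ}, b = ire^{iβ}, δ = (β−θ)/3 and D = diag(e^{iδ}, e^{−iδ}, 1),
one has D A D⁻¹ = ire^{i(2θ+β)/3} E; moreover D is diagonal special unitary and the
scalar has modulus r. -/
theorem vacuum_gauged_to_clifford (r θ β : ℝ) (hr : 0 < r) :
    let a : ℂ := Complex.I * (r : ℂ) * Complex.exp (Complex.I * (θ : ℂ))
    let b : ℂ := Complex.I * (r : ℂ) * Complex.exp (Complex.I * (β : ℂ))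
    let A : Matrix (Fin 3) (Fin 3) ℂ := !![0, 0, a; b, 0, 0; 0, a, 0]
    let δ : ℝ := (β - θ) / 3
    let D : Matrix (Fin 3) (Fin 3) ℂ :=
      Matrix.diagonal ![Complex.exp (Complex.I * (δ : ℂ)),
        Complex.exp (-(Complex.I) * (δ : ℂ)), 1]
    let E : Matrix (Fin 3) (Fin 3) ℂ := !![0, 0, 1; 1, 0, 0; 0, 1, 0]
    let c : ℂ := Complex.I * (r : ℂ) * Complex.exp (Complex.I * (((2 * θ + β) / 3 : ℝ) : ℂ))
    D * A * D⁻¹ = c • E ∧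
    D ∈ Matrix.unitaryGroup (Fin 3) ℂ ∧ D.det = 1 ∧ ‖c‖ = r := by
  intro a b A δ D E c
  have hθ : exp (I * θ) = exp (I * ((2 * θ + β) / 3 : ℝ)) * (exp (I * δ))⁻¹ := by
    rw [← exp_neg, ← exp_add]; push_cast [δ]; ring_nf
  have hβ : exp (I * β) = exp (I * ((2 * θ + β) / 3 : ℝ)) * exp (I * δ) ^ 2 := by
    rw [sq, ← exp_add, ← exp_add]; push_cast [δ]; ring_nf
  refine ⟨?_, ?_, ?_, ?_⟩
  · rw [diagonal_mul_mul_inv_diagonal (by simp [Fin.forall_fin_succ, exp_ne_zero])]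
    ext i j
    fin_cases i <;> fin_cases j <;> simp [A, E, a, b, c, exp_neg, hθ, hβ] <;> field_simp
  · apply diagonal_mem_unitaryGroup
    simp [Fin.forall_fin_succ, norm_exp]
  · simp [D, det_diagonal, Fin.prod_univ_succ, ← exp_add]
  · simp [c, norm_exp, abs_of_pos hr]
end

section
/- Let m be a nonnegative integer and ψ₀ ∈ ℝ. Let u : (0,∞) → ℝ be twice differentiable and satisfy the radial Tzitzeica equation u''(r) + u'(r)/r + 4e^{u(r)} − 4ψ₀² r^{2m} e^{−2u(r)} = 0 for all r > 0. Define h : (0,∞) → ℝ by h(s) = e^{u(s^{2/(m+3)})} · s^{(1−m)/(m+3)}. Then h is twice differentiable and satisfies the Painlevé III equation of type D₇: h''(s) = h'(s)²/h(s) − h'(s)/s − (16/(m+3)²)·h(s)²/s + (16ψ₀²/(m+3)²)·(1/h(s)) for all s > 0. -/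
/-!
Write `r = s^α`, `h(s) = e^{u(r)} s^β` with `α = 2/(m+3)`, `β = (1-m)/(m+3)`. Then
`h' = h q / s` with `q(s) = α r u'(r) + β`, and for any `h` of this form
`h'' = h'^2/h - h'/s + h q'/s`. The Euler operator gives `q' = α² r²/s · (u'' + u'/r)`, which
the Tzitzeica equation replaces by `α² r²/s · (4ψ₀² r^{2m} e^{-2u} - 4e^u)`. The exponents are
tuned so that `r² = s^{β+1}` and `r^{2m+2} s^{2β} = s²`, which turns `h q'/s` into the two
Painlevé terms.
-/

open Real Filter Topology

theorem hasDerivAt_comp_rpow {f : ℝ → ℝ} {s : ℝ} (α : ℝ) (hs : 0 < s)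
    (hf : DifferentiableAt ℝ f (s ^ α)) :
    HasDerivAt (fun t => f (t ^ α)) (α * s ^ α / s * deriv f (s ^ α)) s := by
  refine (hf.hasDerivAt.comp s (hasDerivAt_rpow_const (p := α) (Or.inl hs.ne'))).congr_deriv ?_
  rw [rpow_sub_one hs.ne']
  ring

theorem hasDerivAt_exp_comp_rpow_mul_rpow {u : ℝ → ℝ} {s : ℝ} (α β : ℝ) (hs : 0 < s)
    (hu : DifferentiableAt ℝ u (s ^ α)) :
    HasDerivAt (fun t => exp (u (t ^ α)) * t ^ β)
      (exp (u (s ^ α)) * s ^ β * (α * s ^ α * deriv u (s ^ α) + β) / s) s := by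
  have hpow : HasDerivAt (fun t => t ^ β) (β * s ^ β / s) s := by
    simpa only [rpow_sub_one hs.ne', mul_div_assoc] using
      hasDerivAt_rpow_const (p := β) (Or.inl hs.ne')
  refine ((hasDerivAt_comp_rpow α hs hu).exp.mul hpow).congr_deriv ?_
  field_simp

theorem hasDerivAt_euler_comp_rpow {u : ℝ → ℝ} {s : ℝ} (α β : ℝ) (hs : 0 < s)
    (hu' : DifferentiableAt ℝ (deriv u) (s ^ α)) :
    HasDerivAt (fun t => α * t ^ α * deriv u (t ^ α) + β)
      (α ^ 2 * (s ^ α) ^ 2 / s * (deriv (deriv u) (s ^ α) + deriv u (s ^ α) / s ^ α)) s := by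
  have hr : s ^ α ≠ 0 := (rpow_pos_of_pos hs α).ne'
  have hpow : HasDerivAt (fun t => t ^ α) (α * s ^ α / s) s := by
    simpa only [rpow_sub_one hs.ne', mul_div_assoc] using
      hasDerivAt_rpow_const (p := α) (Or.inl hs.ne')
  refine (((hpow.const_mul α).mul (hasDerivAt_comp_rpow α hs hu')).add_const β).congr_deriv ?_
  field_simp
  ring

theorem hasDerivAt_deriv_of_hasDerivAt_mul_div {h q : ℝ → ℝ} {s g : ℝ} (hs : s ≠ 0)
    (hhs : h s ≠ 0) (hh : ∀ᶠ t in 𝓝 s, HasDerivAt h (h t * q t / t) t)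
    (hq : HasDerivAt q g s) :
    HasDerivAt (deriv h) (deriv h s ^ 2 / h s - deriv h s / s + h s * g / s) s := by
  have hderiv : deriv h =ᶠ[𝓝 s] fun t => h t * q t / t :=
    hh.mono fun t ht => ht.deriv
  have hd := ((hh.self_of_nhds.mul hq).div (hasDerivAt_id s) hs).congr_of_eventuallyEq hderiv
  refine hd.congr_deriv ?_
  rw [hderiv.eq_of_nhds]
  simp only [id, Pi.mul_apply]
  field_simp
  ring

theorem rpow_two_div_sq_eq {m : ℕ} {s : ℝ} (hs : 0 < s) :
    (s ^ ((2 : ℝ) / (m + 3))) ^ 2 = s ^ (((1 : ℝ) - m) / (m + 3)) * s := by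
  rw [← rpow_add_one hs.ne', ← rpow_natCast, ← rpow_mul hs.le]
  congr 1
  field_simp
  ring

theorem rpow_two_div_pow_mul_rpow_sq {m : ℕ} {s : ℝ} (hs : 0 < s) :
    (s ^ ((2 : ℝ) / (m + 3))) ^ (2 * m + 2) * (s ^ (((1 : ℝ) - m) / (m + 3))) ^ 2 = s ^ 2 := by
  simp only [← rpow_natCast, ← rpow_mul hs.le, ← rpow_add hs]
  congr 1
  push_cast
  field_simp
  ring

theorem tzitzeica_source_eq_painleveIII_terms (m : ℕ) (ψ₀ x : ℝ) {s : ℝ} (hs : 0 < s) :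
    exp x * s ^ (((1 : ℝ) - m) / (m + 3)) *
        ((2 / ((m : ℝ) + 3)) ^ 2 * (s ^ ((2 : ℝ) / (m + 3))) ^ 2 / s *
          (4 * ψ₀ ^ 2 * (s ^ ((2 : ℝ) / (m + 3))) ^ (2 * m) * exp (-2 * x) - 4 * exp x)) / s =
      -(16 / ((m : ℝ) + 3) ^ 2) * (exp x * s ^ (((1 : ℝ) - m) / (m + 3))) ^ 2 / s +
        16 * ψ₀ ^ 2 / ((m : ℝ) + 3) ^ 2 * (1 / (exp x * s ^ (((1 : ℝ) - m) / (m + 3)))) := by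
  have hsq := rpow_two_div_sq_eq (m := m) hs
  have hpow := rpow_two_div_pow_mul_rpow_sq (m := m) hs
  set r := s ^ ((2 : ℝ) / (m + 3))
  set S := s ^ (((1 : ℝ) - m) / (m + 3))
  have hS : 0 < S := rpow_pos_of_pos hs _
  have hexp : exp (-2 * x) = (exp x ^ 2)⁻¹ := by
    rw [← exp_nat_mul, ← exp_neg]
    push_cast
    ring_nf
  rw [pow_add] at hpow
  rw [hexp]
  field_simp
  linear_combination (16 * ψ₀ ^ 2) * hpow - 16 * S ^ 2 * exp x ^ 3 * hsq

/-- The substitution h(s) = e^{u(s^{2/(m+3)})} s^{(1−m)/(m+3)} turns the radial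
Tzitzeica equation into the Painlevé III equation of type D₇. -/
theorem radial_tzitzeica_to_painleveIII
    (m : ℕ) (ψ₀ : ℝ) (u : ℝ → ℝ)
    (hu1 : ∀ r ∈ Set.Ioi (0 : ℝ), DifferentiableAt ℝ u r)
    (hu2 : ∀ r ∈ Set.Ioi (0 : ℝ), DifferentiableAt ℝ (deriv u) r)
    (hODE : ∀ r ∈ Set.Ioi (0 : ℝ),
      deriv (deriv u) r + deriv u r / r + 4 * Real.exp (u r) -
        4 * ψ₀ ^ 2 * r ^ (2 * m) * Real.exp (-2 * u r) = 0) :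
    let h : ℝ → ℝ := fun s =>
      Real.exp (u (s ^ ((2 : ℝ) / (m + 3)))) * s ^ (((1 : ℝ) - m) / (m + 3))
    (∀ s ∈ Set.Ioi (0 : ℝ), DifferentiableAt ℝ h s) ∧
    (∀ s ∈ Set.Ioi (0 : ℝ), DifferentiableAt ℝ (deriv h) s) ∧
    (∀ s ∈ Set.Ioi (0 : ℝ),
      deriv (deriv h) s =
        (deriv h s) ^ 2 / h s - deriv h s / s -
          (16 / ((m : ℝ) + 3) ^ 2) * (h s) ^ 2 / s +
          (16 * ψ₀ ^ 2 / ((m : ℝ) + 3) ^ 2) * (1 / h s)) := by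
  intro h
  set α : ℝ := 2 / (m + 3)
  set β : ℝ := (1 - m) / (m + 3)
  have hr : ∀ s ∈ Set.Ioi (0 : ℝ), 0 < s ^ α := fun s hs => rpow_pos_of_pos hs α
  have hh : ∀ s ∈ Set.Ioi (0 : ℝ),
      HasDerivAt h (h s * (α * s ^ α * deriv u (s ^ α) + β) / s) s := fun s hs =>
    hasDerivAt_exp_comp_rpow_mul_rpow α β hs (hu1 _ (hr s hs))
  have hh' : ∀ s ∈ Set.Ioi (0 : ℝ), HasDerivAt (deriv h) _ s := fun s hs =>
    hasDerivAt_deriv_of_hasDerivAt_mul_div (ne_of_gt hs)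
      (mul_pos (exp_pos _) (rpow_pos_of_pos hs _)).ne'
      (eventually_of_mem (isOpen_Ioi.mem_nhds hs) hh)
      (hasDerivAt_euler_comp_rpow α β hs (hu2 _ (hr s hs)))
  refine ⟨fun s hs => (hh s hs).differentiableAt, fun s hs => (hh' s hs).differentiableAt,
    fun s hs => ?_⟩
  have hTz : deriv (deriv u) (s ^ α) + deriv u (s ^ α) / s ^ α =
      4 * ψ₀ ^ 2 * (s ^ α) ^ (2 * m) * exp (-2 * u (s ^ α)) - 4 * exp (u (s ^ α)) := by
    linarith [hODE _ (hr s hs)]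
  have hsource : h s * (α ^ 2 * (s ^ α) ^ 2 / s *
      (4 * ψ₀ ^ 2 * (s ^ α) ^ (2 * m) * exp (-2 * u (s ^ α)) - 4 * exp (u (s ^ α)))) / s =
      -(16 / ((m : ℝ) + 3) ^ 2) * h s ^ 2 / s + 16 * ψ₀ ^ 2 / ((m : ℝ) + 3) ^ 2 * (1 / h s) :=
    tzitzeica_source_eq_painleveIII_terms m ψ₀ _ hs
  rw [(hh' s hs).deriv, hTz, hsource]
  ring
end

section
/- Let t ∈ ℝ, t ≠ 0, and define v : ℂ → ℂ³ by v(z) = (1 + t²|z|²/2)⁻¹ · (i t z, i t z̄, 1 − t²|z|²/2). Then: (i) v(z)·conj v(z) = 1 for all z (v maps into the unit sphere S⁵); (ii) v is horizontal, i.e. (∂ₓv)·conj v = 0 and (∂ᵧv)·conj v = 0; and (iii) there exists a unitary 3×3 matrix W such that every component of W·v(z) is real for all z ∈ ℂ (so the induced surface in ℂP² lies, up to an isometry, in the real projective plane ℝP² ⊂ ℂP²). -/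
open Complex Matrix

/-- The standard Hermitian inner product Z·conj W on ℂ³. -/
noncomputable def herm (Z W : Fin 3 → ℂ) : ℂ :=
  ∑ k : Fin 3, Z k * (starRingEnd ℂ) (W k)

/-- Partial derivative in the x-direction (z = x + iy). -/
noncomputable def pdx {E : Type*} [NormedAddCommGroup E] [NormedSpace ℝ E]
    (f : ℂ → E) (z : ℂ) : E :=
  fderiv ℝ f z 1

/-- Partial derivative in the y-direction (z = x + iy). -/
noncomputable def pdy {E : Type*} [NormedAddCommGroup E] [NormedSpace ℝ E]
    (f : ℂ → E) (z : ℂ) : E :=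
  fderiv ℝ f z Complex.I

/-!
Up to the unitary frame `U = liftFrame` the lift is real: `v = U *ᵥ ρ`, where `ρ z ∈ S² ⊆ ℝ³`
is the inverse stereographic projection of `t z / √2`. A unitary matrix preserves `herm`, and on
real vectors `herm` is the Euclidean inner product; hence `herm v v = ‖ρ‖² = 1`, and
`herm (∂v) v = ⟪∂ρ, ρ⟫ = ½ ∂‖ρ‖² = 0`. Finally `Uᴴ` takes `v` back to the real vector `ρ`.
-/

open scoped InnerProductSpace

theorem inner_fderiv_apply_self_eq_zero {E F : Type*} [NormedAddCommGroup E] [NormedSpace ℝ E]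
    [NormedAddCommGroup F] [InnerProductSpace ℝ F] {f : E → F} {x : E} {r : ℝ}
    (hf : DifferentiableAt ℝ f x) (hr : ∀ y, ‖f y‖ = r) (h : E) :
    ⟪fderiv ℝ f x h, f x⟫_ℝ = 0 := by
  have hconst : (fun y => ⟪f y, f y⟫_ℝ) = fun _ => r ^ 2 := by
    funext y
    rw [real_inner_self_eq_norm_sq, hr]
  have hderiv := fderiv_inner_apply ℝ hf hf h
  rw [hconst, fderiv_const_apply, _root_.zero_apply] at hderiv
  linarith [real_inner_comm (f x) (fderiv ℝ f x h)]

theorem herm_mulVec_mulVec {U : Matrix (Fin 3) (Fin 3) ℂ} (hU : U ∈ unitaryGroup (Fin 3) ℂ)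
    (Z W : Fin 3 → ℂ) : herm (U *ᵥ Z) (U *ᵥ W) = herm Z W := by
  change (U *ᵥ Z) ⬝ᵥ star (U *ᵥ W) = Z ⬝ᵥ star W
  rw [star_mulVec, dotProduct_comm, ← dotProduct_mulVec, mulVec_mulVec, ← star_eq_conjTranspose,
    mem_unitaryGroup_iff'.1 hU, one_mulVec, dotProduct_comm]

noncomputable def realToComplex (n : ℕ) : EuclideanSpace ℝ (Fin n) →L[ℝ] (Fin n → ℂ) :=
  ContinuousLinearMap.pi fun k => ofRealCLM ∘L EuclideanSpace.proj k

theorem realToComplex_apply {n : ℕ} (a : EuclideanSpace ℝ (Fin n)) (k : Fin n) :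
    realToComplex n a k = a k :=
  rfl

theorem herm_realToComplex (a b : EuclideanSpace ℝ (Fin 3)) :
    herm (realToComplex 3 a) (realToComplex 3 b) = ⟪a, b⟫_ℝ := by
  simp [herm, realToComplex_apply, PiLp.inner_apply, mul_comm]

theorem fderiv_mulVec_realToComplex {n : ℕ} (U : Matrix (Fin n) (Fin n) ℂ) {E : Type*}
    [NormedAddCommGroup E] [NormedSpace ℝ E] {ρ : E → EuclideanSpace ℝ (Fin n)} {x : E}
    (hρ : DifferentiableAt ℝ ρ x) (h : E) :
    fderiv ℝ (fun y => U *ᵥ realToComplex n (ρ y)) x h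
      = U *ᵥ realToComplex n (fderiv ℝ ρ x h) := by
  let L : (Fin n → ℂ) →L[ℝ] (Fin n → ℂ) :=
    LinearMap.toContinuousLinearMap (U.mulVecLin.restrictScalars ℝ)
  have hL : HasFDerivAt (fun y => U *ᵥ realToComplex n (ρ y))
      ((L ∘L realToComplex n) ∘L fderiv ℝ ρ x) x :=
    (L ∘L realToComplex n).hasFDerivAt.comp x hρ.hasFDerivAt
  rw [hL.fderiv]
  rfl

theorem herm_mulVec_realToComplex {U : Matrix (Fin 3) (Fin 3) ℂ}
    (hU : U ∈ unitaryGroup (Fin 3) ℂ) (a b : EuclideanSpace ℝ (Fin 3)) :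
    herm (U *ᵥ realToComplex 3 a) (U *ᵥ realToComplex 3 b) = ⟪a, b⟫_ℝ := by
  rw [herm_mulVec_mulVec hU, herm_realToComplex]

theorem herm_fderiv_mulVec_realToComplex_eq_zero {U : Matrix (Fin 3) (Fin 3) ℂ}
    (hU : U ∈ unitaryGroup (Fin 3) ℂ) {E : Type*} [NormedAddCommGroup E] [NormedSpace ℝ E]
    {ρ : E → EuclideanSpace ℝ (Fin 3)} {x : E} {r : ℝ}
    (hρ : DifferentiableAt ℝ ρ x) (hr : ∀ y, ‖ρ y‖ = r) (h : E) :
    herm (fderiv ℝ (fun y => U *ᵥ realToComplex 3 (ρ y)) x h) (U *ᵥ realToComplex 3 (ρ x))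
      = 0 := by
  rw [fderiv_mulVec_realToComplex U hρ, herm_mulVec_realToComplex hU,
    inner_fderiv_apply_self_eq_zero hρ hr, ofReal_zero]

theorem star_mulVec_mulVec_realToComplex {U : Matrix (Fin 3) (Fin 3) ℂ}
    (hU : U ∈ unitaryGroup (Fin 3) ℂ) (a : EuclideanSpace ℝ (Fin 3)) :
    star U *ᵥ (U *ᵥ realToComplex 3 a) = realToComplex 3 a := by
  rw [mulVec_mulVec, mem_unitaryGroup_iff'.1 hU, one_mulVec]

/-- Inverse of the stereographic projection of `S²` from its south pole. -/
noncomputable def inverseStereographic (w : ℂ) : EuclideanSpace ℝ (Fin 3) :=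
  (1 + ‖w‖ ^ 2)⁻¹ • !₂[2 * w.re, 2 * w.im, 1 - ‖w‖ ^ 2]

theorem norm_inverseStereographic (w : ℂ) : ‖inverseStereographic w‖ = 1 := by
  have hw : ‖w‖ ^ 2 = w.re ^ 2 + w.im ^ 2 := by
    rw [Complex.sq_norm, Complex.normSq_apply]; ring
  have hpos : 1 + ‖w‖ ^ 2 ≠ 0 := by positivity
  refine (pow_eq_one_iff_of_nonneg (norm_nonneg _) two_ne_zero).1 ?_
  rw [EuclideanSpace.real_norm_sq_eq]
  simp only [inverseStereographic, PiLp.smul_apply, smul_eq_mul, Fin.sum_univ_three, Fin.isValue,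
    cons_val_zero, cons_val_one, cons_val]
  field_simp
  rw [hw]; ring

theorem differentiable_inverseStereographic : Differentiable ℝ inverseStereographic := by
  have hnorm : Differentiable ℝ fun w : ℂ => ‖w‖ ^ 2 := differentiable_id.norm_sq ℝ
  have hpos : ∀ w : ℂ, 1 + ‖w‖ ^ 2 ≠ 0 := fun w => by positivity
  refine (differentiable_piLp 2).2 fun i => ?_
  fin_cases i <;>
    simp only [inverseStereographic, PiLp.smul_apply, smul_eq_mul, Fin.isValue, Fin.zero_eta,
      Fin.mk_one, Fin.reduceFinMk, cons_val_zero, cons_val_one, cons_val] <;>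
    fun_prop (disch := exact hpos _)

noncomputable def totallyGeodesicLift (t : ℝ) (z : ℂ) : Fin 3 → ℂ :=
  (((1 + t ^ 2 * ‖z‖ ^ 2 / 2 : ℝ)) : ℂ)⁻¹ •
    ![I * t * z, I * t * (starRingEnd ℂ) z, ((1 - t ^ 2 * ‖z‖ ^ 2 / 2 : ℝ) : ℂ)]

theorem ofReal_sqrt_two_sq : ((√2 : ℝ) : ℂ) ^ 2 = 2 := by
  rw [← ofReal_pow, Real.sq_sqrt zero_le_two, ofReal_ofNat]

theorem ofReal_sqrt_two_ne_zero : ((√2 : ℝ) : ℂ) ≠ 0 :=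
  ofReal_ne_zero.2 (Real.sqrt_pos.2 zero_lt_two).ne'

noncomputable def liftFrame : Matrix (Fin 3) (Fin 3) ℂ :=
  !![I / √2, -1 / √2, 0; I / √2, 1 / √2, 0; 0, 0, 1]

theorem liftFrame_mem_unitaryGroup : liftFrame ∈ unitaryGroup (Fin 3) ℂ := by
  have hs0 := ofReal_sqrt_two_ne_zero
  rw [mem_unitaryGroup_iff]
  ext i j
  fin_cases i <;> fin_cases j <;>
    simp only [liftFrame, mul_apply, Fin.sum_univ_three, star_apply, of_apply, cons_val',
      cons_val_zero, cons_val_one, cons_val, cons_val_fin_one, one_apply, RCLike.star_def,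
      map_div₀, map_neg, map_one, map_zero, conj_I, conj_ofReal, Fin.isValue, Fin.zero_eta,
      Fin.mk_one, Fin.reduceFinMk, Fin.reduceEq, ↓reduceIte] <;>
    field_simp <;> norm_num [I_sq, ofReal_sqrt_two_sq]

theorem totallyGeodesicLift_eq (t : ℝ) (z : ℂ) :
    totallyGeodesicLift t z
      = liftFrame *ᵥ realToComplex 3 (inverseStereographic ((t / √2 : ℝ) • z)) := by
  have hs0 := ofReal_sqrt_two_ne_zero
  have hw : ‖(t / √2 : ℝ) • z‖ ^ 2 = t ^ 2 * ‖z‖ ^ 2 / 2 := by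
    rw [norm_smul, mul_pow, Real.norm_eq_abs, sq_abs, div_pow, Real.sq_sqrt zero_le_two]; ring
  have hA : ((1 + t ^ 2 * ‖z‖ ^ 2 / 2 : ℝ) : ℂ) ≠ 0 := by
    exact_mod_cast (show 0 < 1 + t ^ 2 * ‖z‖ ^ 2 / 2 by positivity).ne'
  have hz : z = z.re + z.im * I := (re_add_im z).symm
  have hz' : (starRingEnd ℂ) z = z.re - z.im * I := by apply Complex.ext <;> simp
  rw [totallyGeodesicLift, inverseStereographic, hw]
  ext j
  fin_cases j <;>
    simp only [liftFrame, mulVec, dotProduct, Fin.sum_univ_three, of_apply, cons_val',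
      cons_val_fin_one, cons_val_zero, cons_val_one, cons_val, Pi.smul_apply, PiLp.smul_apply,
      smul_eq_mul, realToComplex_apply, smul_re, smul_im, Fin.isValue, Fin.zero_eta, Fin.mk_one,
      Fin.reduceFinMk, zero_mul, zero_add, add_zero]
  all_goals push_cast at hA ⊢
  all_goals field_simp
  · congr 1
    linear_combination t * I * z * ofReal_sqrt_two_sq + 2 * t * I * hz + 2 * t * z.im * I_sq
  · congr 1
    linear_combination
      t * I * (starRingEnd ℂ) z * ofReal_sqrt_two_sq + 2 * t * I * hz' - 2 * t * z.im * I_sq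

theorem totally_geodesic_lift_properties_general (t : ℝ) :
    let v : ℂ → Fin 3 → ℂ := fun z =>
      (((1 + t ^ 2 * ‖z‖ ^ 2 / 2 : ℝ)) : ℂ)⁻¹ •
        ![Complex.I * (t : ℂ) * z,
          Complex.I * (t : ℂ) * (starRingEnd ℂ) z,
          ((1 - t ^ 2 * ‖z‖ ^ 2 / 2 : ℝ) : ℂ)]
    -- (i) v maps into the unit sphere S⁵
    (∀ z : ℂ, herm (v z) (v z) = 1) ∧
    -- (ii) v is horizontal
    (∀ z : ℂ, herm (pdx v z) (v z) = 0 ∧ herm (pdy v z) (v z) = 0) ∧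
    -- (iii) up to a unitary transformation, v is real-valued
    (∃ W : Matrix (Fin 3) (Fin 3) ℂ, W ∈ Matrix.unitaryGroup (Fin 3) ℂ ∧
      ∀ z : ℂ, ∀ j : Fin 3, (W.mulVec (v z) j).im = 0) := by
  intro v
  let ρ : ℂ → EuclideanSpace ℝ (Fin 3) := fun z => inverseStereographic ((t / √2 : ℝ) • z)
  have hv : v = fun z => liftFrame *ᵥ realToComplex 3 (ρ z) := funext (totallyGeodesicLift_eq t)
  have hρ : Differentiable ℝ ρ :=
    differentiable_inverseStereographic.comp (differentiable_id.const_smul (t / √2 : ℝ))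
  have hsphere : ∀ z, ‖ρ z‖ = 1 := fun z => norm_inverseStereographic _
  have hU := liftFrame_mem_unitaryGroup
  clear_value v ρ
  subst hv
  refine ⟨fun z => ?_, fun z => ⟨?_, ?_⟩, star liftFrame, Unitary.star_mem hU, fun z j => ?_⟩
  · rw [herm_mulVec_realToComplex hU, real_inner_self_eq_norm_sq, hsphere, one_pow, ofReal_one]
  · exact herm_fderiv_mulVec_realToComplex_eq_zero hU (hρ z) hsphere 1
  · exact herm_fderiv_mulVec_realToComplex_eq_zero hU (hρ z) hsphere I
  · rw [star_mulVec_mulVec_realToComplex hU, realToComplex_apply, ofReal_im]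

/-- The explicit horizontal lift of the totally geodesic (ψ ≡ 0) minimal
Lagrangian surface: it maps into S⁵, is horizontal, and after a unitary change of
coordinates takes real values, so the surface lies in ℝP² ⊂ ℂP². -/
theorem totally_geodesic_lift_properties (t : ℝ) (ht : t ≠ 0) :
    let v : ℂ → Fin 3 → ℂ := fun z =>
      (((1 + t ^ 2 * ‖z‖ ^ 2 / 2 : ℝ)) : ℂ)⁻¹ •
        ![Complex.I * (t : ℂ) * z,
          Complex.I * (t : ℂ) * (starRingEnd ℂ) z,
          ((1 - t ^ 2 * ‖z‖ ^ 2 / 2 : ℝ) : ℂ)]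
    -- (i) v maps into the unit sphere S⁵
    (∀ z : ℂ, herm (v z) (v z) = 1) ∧
    -- (ii) v is horizontal
    (∀ z : ℂ, herm (pdx v z) (v z) = 0 ∧ herm (pdy v z) (v z) = 0) ∧
    -- (iii) up to a unitary transformation, v is real-valued
    (∃ W : Matrix (Fin 3) (Fin 3) ℂ, W ∈ Matrix.unitaryGroup (Fin 3) ℂ ∧
      ∀ z : ℂ, ∀ j : Fin 3, (W.mulVec (v z) j).im = 0) :=
  totally_geodesic_lift_properties_general t
end
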